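/- arXiv:1811.09716 — 4 statements merged into one kernel-verified Lean document; each statement's English description precedes it below -/
import Mathlib

section
/- Let r ∈ ℝ^d satisfy gᵀr + (1/2)·rᵀHr ≥ c. Then ‖r‖ ≥ (‖g‖/ν)·(√(1 + 2νc/‖g‖²) − 1). (Lower bound of Theorem 1: every perturbation that fools the quadratically-approximated classifier has Euclidean norm at least this value.) -/
open Matrix

/-!
By Cauchy–Schwarz and the Rayleigh bound `rᵀHr ≤ ν‖r‖²`, a fooling perturbation satisfies
`c ≤ ‖g‖‖r‖ + (ν/2)‖r‖²`. The right-hand side is increasing in `‖r‖ ≥ 0`, so `‖r‖` is at least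
the positive root `(√(‖g‖² + 2νc) − ‖g‖)/ν` of `(ν/2)x² + ‖g‖x = c`.
-/

theorem positive_root_le_of_le_linear_add_quadratic {G ν c x : ℝ} (hG : 0 ≤ G) (hν : 0 < ν)
    (hx : 0 ≤ x) (h : c ≤ G * x + ν / 2 * x ^ 2) :
    G / ν * (√(1 + 2 * ν * c / G ^ 2) - 1) ≤ x := by
  rcases hG.eq_or_lt with rfl | hG
  · simpa using hx
  have hsqrt : √(1 + 2 * ν * c / G ^ 2) ≤ 1 + ν * x / G := by
    rw [Real.sqrt_le_left (by positivity), ← sub_nonneg]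
    have hgap : (1 + ν * x / G) ^ 2 - (1 + 2 * ν * c / G ^ 2)
        = 2 * ν * (G * x + ν / 2 * x ^ 2 - c) / G ^ 2 := by
      field_simp
      ring
    rw [hgap]
    have hslack := sub_nonneg.mpr h
    positivity
  calc G / ν * (√(1 + 2 * ν * c / G ^ 2) - 1) ≤ G / ν * (1 + ν * x / G - 1) := by gcongr
    _ = x := by field_simp; ring

theorem EuclideanSpace.dotProduct_le_norm_mul_norm {ι : Type*} [Fintype ι]
    (x y : EuclideanSpace ℝ ι) : x ⬝ᵥ y ≤ ‖x‖ * ‖y‖ := by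
  calc x ⬝ᵥ y = inner ℝ x y := by
        rw [EuclideanSpace.inner_eq_star_dotProduct, star_trivial, dotProduct_comm]
    _ ≤ ‖x‖ * ‖y‖ := real_inner_le_norm x y

theorem lower_bound_robustness_general {d : ℕ} (H : Matrix (Fin d) (Fin d) ℝ)
    (ν : ℝ) (hν : 0 < ν)
    (hray : ∀ r : EuclideanSpace ℝ (Fin d), r ⬝ᵥ H.mulVec r ≤ ν * ‖r‖ ^ 2)
    (g : EuclideanSpace ℝ (Fin d)) (c : ℝ)
    (r : EuclideanSpace ℝ (Fin d))
    (hr : g ⬝ᵥ r + (1 / 2) * (r ⬝ᵥ H.mulVec r) ≥ c) :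
    ‖g‖ / ν * (Real.sqrt (1 + 2 * ν * c / ‖g‖ ^ 2) - 1) ≤ ‖r‖ := by
  refine positive_root_le_of_le_linear_add_quadratic (norm_nonneg g) hν (norm_nonneg r) ?_
  linarith [EuclideanSpace.dotProduct_le_norm_mul_norm g r, hray r]

/-- Lower bound of Theorem 1: every perturbation `r` fooling the quadratically-approximated
classifier (`gᵀr + (1/2)·rᵀHr ≥ c`) has Euclidean norm at least
`(‖g‖/ν)·(√(1 + 2νc/‖g‖²) − 1)`. -/
theorem lower_bound_robustness {d : ℕ} (H : Matrix (Fin d) (Fin d) ℝ) (hH : H.IsSymm)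
    (ν : ℝ) (hν : 0 < ν)
    (hray : ∀ r : EuclideanSpace ℝ (Fin d), r ⬝ᵥ H.mulVec r ≤ ν * ‖r‖ ^ 2)
    (g : EuclideanSpace ℝ (Fin d)) (hg : g ≠ 0) (c : ℝ) (hc : 0 ≤ c)
    (r : EuclideanSpace ℝ (Fin d))
    (hr : g ⬝ᵥ r + (1 / 2) * (r ⬝ᵥ H.mulVec r) ≥ c) :
    ‖g‖ / ν * (Real.sqrt (1 + 2 * ν * c / ‖g‖ ^ 2) - 1) ≤ ‖r‖ :=
  lower_bound_robustness_general H ν hν hray g c r hr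
end

section
/- There exists r ∈ ℝ^d with gᵀr + (1/2)·rᵀHr ≥ c and ‖r‖ ≤ (|gᵀu|/ν)·(√(1 + 2νc/(gᵀu)²) − 1). Concretely, r = α·u works, where α has the same sign as gᵀu and |α| = (|gᵀu|/ν)·(√(1 + 2νc/(gᵀu)²) − 1). (Upper bound of Theorem 1.) -/
/-!
Along the unit eigenvector `u` the quadratic model restricts to the scalar quadratic
`α ↦ α (gᵀu) + να²/2`, and `‖α u‖ = |α|`. The witness `sign(gᵀu) · |gᵀu|/ν · (…)` is just
`(gᵀu/ν)(√(1 + 2νc/(gᵀu)²) − 1)`, the root of `α (gᵀu) + να²/2 = c` given by the quadratic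
formula; for `c ≥ 0` the square root is at least `1`, which gives the norm bound.
-/

open Matrix

theorem Real.sign_mul_abs (r : ℝ) : Real.sign r * |r| = r := by
  rcases lt_trichotomy r 0 with h | rfl | h
  · rw [Real.sign_of_neg h, abs_of_neg h]; ring
  · simp
  · rw [Real.sign_of_pos h, abs_of_pos h]; ring

theorem mul_add_half_mul_sq_eq_of_sq_eq {s ν c q : ℝ} (hs : s ≠ 0) (hν : ν ≠ 0)
    (hq : q ^ 2 = 1 + 2 * ν * c / s ^ 2) :
    s / ν * (q - 1) * s + 1 / 2 * (ν * (s / ν * (q - 1)) ^ 2) = c := by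
  calc s / ν * (q - 1) * s + 1 / 2 * (ν * (s / ν * (q - 1)) ^ 2)
      = s ^ 2 / (2 * ν) * (q ^ 2 - 1) := by field_simp; ring
    _ = c := by rw [hq]; field_simp; ring

theorem Matrix.dotProduct_smul_add_half_dotProduct_mulVec_smul_of_eigenvector
    {R n : Type*} [Field R] [Fintype n] {H : Matrix n n R} {ν : R} {u : n → R} (hu : H *ᵥ u = ν • u)
    (hu1 : u ⬝ᵥ u = 1) (g : n → R) (α : R) :
    g ⬝ᵥ (α • u) + 1 / 2 * ((α • u) ⬝ᵥ H *ᵥ (α • u)) = α * (g ⬝ᵥ u) + 1 / 2 * (ν * α ^ 2) := by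
  simp only [mulVec_smul, hu, dotProduct_smul, smul_dotProduct, hu1, smul_eq_mul]
  ring

theorem EuclideanSpace.dotProduct_self_eq_one {n : Type*} [Fintype n]
    {u : EuclideanSpace ℝ n} (hu : ‖u‖ = 1) : (u : n → ℝ) ⬝ᵥ u = 1 := by
  have := EuclideanSpace.real_norm_sq_eq u
  rw [hu, one_pow] at this
  simp [dotProduct, ← sq, this]

theorem upper_bound_robustness_general {d : ℕ} (H : Matrix (Fin d) (Fin d) ℝ)
    (ν : ℝ) (hν : 0 < ν) (u : EuclideanSpace ℝ (Fin d))
    (hu : H.mulVec u = ν • (u : Fin d → ℝ)) (hu1 : ‖u‖ = 1)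
    (g : EuclideanSpace ℝ (Fin d)) (hgu : g ⬝ᵥ u ≠ 0) (c : ℝ) (hc : 0 ≤ c) :
    ∃ r : EuclideanSpace ℝ (Fin d),
      r = (Real.sign (g ⬝ᵥ u) *
            (|g ⬝ᵥ u| / ν * (Real.sqrt (1 + 2 * ν * c / (g ⬝ᵥ u) ^ 2) - 1))) • u ∧
      g ⬝ᵥ r + (1 / 2) * (r ⬝ᵥ H.mulVec r) ≥ c ∧
      ‖r‖ ≤ |g ⬝ᵥ u| / ν * (Real.sqrt (1 + 2 * ν * c / (g ⬝ᵥ u) ^ 2) - 1) := by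
  set s := g ⬝ᵥ u
  have hT : 0 ≤ 2 * ν * c / s ^ 2 := by positivity
  have hα : Real.sign s * (|s| / ν * (Real.sqrt (1 + 2 * ν * c / s ^ 2) - 1)) =
      s / ν * (Real.sqrt (1 + 2 * ν * c / s ^ 2) - 1) := by
    rw [← mul_assoc, mul_div_assoc', Real.sign_mul_abs]
  refine ⟨_, rfl, ?_, ?_⟩ <;> rw [hα]
  · exact (Matrix.dotProduct_smul_add_half_dotProduct_mulVec_smul_of_eigenvector hu
      (EuclideanSpace.dotProduct_self_eq_one hu1) _ _).trans
      (mul_add_half_mul_sq_eq_of_sq_eq hgu hν.ne' (Real.sq_sqrt (by linarith))) |>.ge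
  · rw [norm_smul, hu1, mul_one, Real.norm_eq_abs, abs_mul, abs_div, abs_of_pos hν,
      abs_of_nonneg (sub_nonneg.mpr (Real.one_le_sqrt.mpr (by linarith)))]

/-- Upper bound of Theorem 1: there exists a perturbation `r` that fools the
quadratically-approximated classifier with
`‖r‖ ≤ (|gᵀu|/ν)·(√(1 + 2νc/(gᵀu)²) − 1)`; concretely `r = α·u` works, where `α` has the
same sign as `gᵀu` and `|α| = (|gᵀu|/ν)·(√(1 + 2νc/(gᵀu)²) − 1)`. -/
theorem upper_bound_robustness {d : ℕ} (H : Matrix (Fin d) (Fin d) ℝ) (hH : H.IsSymm)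
    (ν : ℝ) (hν : 0 < ν) (u : EuclideanSpace ℝ (Fin d))
    (hu : H.mulVec u = ν • (u : Fin d → ℝ)) (hu1 : ‖u‖ = 1)
    (g : EuclideanSpace ℝ (Fin d)) (hgu : g ⬝ᵥ u ≠ 0) (c : ℝ) (hc : 0 ≤ c) :
    ∃ r : EuclideanSpace ℝ (Fin d),
      r = (Real.sign (g ⬝ᵥ u) *
            (|g ⬝ᵥ u| / ν * (Real.sqrt (1 + 2 * ν * c / (g ⬝ᵥ u) ^ 2) - 1))) • u ∧
      g ⬝ᵥ r + (1 / 2) * (r ⬝ᵥ H.mulVec r) ≥ c ∧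
      ‖r‖ ≤ |g ⬝ᵥ u| / ν * (Real.sqrt (1 + 2 * ν * c / (g ⬝ᵥ u) ^ 2) - 1) :=
  upper_bound_robustness_general H ν hν u hu hu1 g hgu c hc
end

section
/- The infimum of ‖r‖ over the nonempty set F = {r ∈ ℝ^d : gᵀr + (1/2)·rᵀHr ≥ c} satisfies (‖g‖/ν)·(√(1 + 2νc/‖g‖²) − 1) ≤ inf{‖r‖ : r ∈ F} ≤ (|gᵀu|/ν)·(√(1 + 2νc/(gᵀu)²) − 1). (Full statement of Theorem 1: the minimal adversarial perturbation norm r* is bracketed by these two curvature-dependent bounds.) -/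
open Matrix

set_option maxHeartbeats 1000000

lemma dot_eq_inner {d : ℕ} (x y : EuclideanSpace ℝ (Fin d)) :
    x ⬝ᵥ (y : Fin d → ℝ) = inner ℝ x y := by
  simp [PiLp.inner_apply, RCLike.inner_apply, dotProduct, mul_comm]

/-- Full statement of Theorem 1: the minimal adversarial perturbation norm
`inf{‖r‖ : gᵀr + (1/2)·rᵀHr ≥ c}` is bracketed between
`(‖g‖/ν)·(√(1 + 2νc/‖g‖²) − 1)` and `(|gᵀu|/ν)·(√(1 + 2νc/(gᵀu)²) − 1)`. -/
theorem robustness_bounds {d : ℕ} (H : Matrix (Fin d) (Fin d) ℝ) (hH : H.IsSymm)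
    (ν : ℝ) (hν : 0 < ν)
    (hray : ∀ r : EuclideanSpace ℝ (Fin d), r ⬝ᵥ H.mulVec r ≤ ν * ‖r‖ ^ 2)
    (u : EuclideanSpace ℝ (Fin d))
    (hu : H.mulVec u = ν • (u : Fin d → ℝ)) (hu1 : ‖u‖ = 1)
    (g : EuclideanSpace ℝ (Fin d)) (hgu : g ⬝ᵥ u ≠ 0) (c : ℝ) (hc : 0 ≤ c) :
    ‖g‖ / ν * (Real.sqrt (1 + 2 * ν * c / ‖g‖ ^ 2) - 1) ≤
      sInf (norm '' {r : EuclideanSpace ℝ (Fin d) |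
        g ⬝ᵥ r + (1 / 2) * (r ⬝ᵥ H.mulVec r) ≥ c}) ∧
    sInf (norm '' {r : EuclideanSpace ℝ (Fin d) |
        g ⬝ᵥ r + (1 / 2) * (r ⬝ᵥ H.mulVec r) ≥ c}) ≤
      |g ⬝ᵥ u| / ν * (Real.sqrt (1 + 2 * ν * c / (g ⬝ᵥ u) ^ 2) - 1) := by
  have ha : (g ⬝ᵥ (u : Fin d → ℝ)) = g ⬝ᵥ (u : Fin d → ℝ) := rfl
  obtain ⟨a, ha⟩ : ∃ a : ℝ, a = g ⬝ᵥ (u : Fin d → ℝ) := ⟨_, rfl⟩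
  rw [← ha] at hgu ⊢
  have ha0 : 0 < |a| := abs_pos.mpr hgu
  have ha2 : (0:ℝ) < a ^ 2 := by positivity
  obtain ⟨s, hs⟩ : ∃ s : ℝ, s = Real.sqrt (1 + 2 * ν * c / a ^ 2) := ⟨_, rfl⟩
  rw [← hs]
  have hsq : s ^ 2 = 1 + 2 * ν * c / a ^ 2 := by
    rw [hs, Real.sq_sqrt]; positivity
  have hsnn : 0 ≤ s := hs ▸ Real.sqrt_nonneg _
  have hx : (0:ℝ) ≤ 2 * ν * c / a ^ 2 := by positivity
  have hs1 : 1 ≤ s := by nlinarith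
  obtain ⟨t, ht⟩ : ∃ t : ℝ, t = |a| / ν * (s - 1) := ⟨_, rfl⟩
  rw [← ht]
  have ht0 : 0 ≤ t := ht ▸ mul_nonneg (by positivity) (by linarith)
  obtain ⟨σ, hσ⟩ : ∃ σ : ℝ, σ = |a| / a := ⟨_, rfl⟩
  have hσa : σ * a = |a| := by rw [hσ]; field_simp
  have hσ2 : σ ^ 2 = 1 := by
    rw [hσ, div_pow, sq_abs, div_self (pow_ne_zero 2 hgu)]
  have hσabs : |σ| = 1 := by
    rw [hσ, abs_div, abs_abs, div_self (abs_ne_zero.mpr hgu)]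
  obtain ⟨r0, hr0⟩ : ∃ r0 : EuclideanSpace ℝ (Fin d), r0 = (t * σ) • u := ⟨_, rfl⟩
  have huu : u ⬝ᵥ (u : Fin d → ℝ) = 1 := by
    rw [dot_eq_inner, real_inner_self_eq_norm_sq, hu1]; norm_num
  have hgr0 : g ⬝ᵥ (r0 : Fin d → ℝ) = t * |a| := by
    rw [hr0]
    calc g ⬝ᵥ ((t * σ) • (u : Fin d → ℝ)) = (t * σ) * (g ⬝ᵥ (u : Fin d → ℝ)) := by
          rw [dotProduct_smul, smul_eq_mul]
      _ = t * (σ * a) := by rw [← ha]; ring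
      _ = t * |a| := by rw [hσa]
  have hrHr : r0 ⬝ᵥ H.mulVec (r0 : Fin d → ℝ) = ν * t ^ 2 := by
    rw [hr0]
    show ((t * σ) • (u : Fin d → ℝ)) ⬝ᵥ H.mulVec ((t * σ) • (u : Fin d → ℝ)) = _
    rw [Matrix.mulVec_smul, hu, smul_dotProduct, dotProduct_smul, dotProduct_smul, huu]
    simp only [smul_eq_mul]
    linear_combination (ν * t ^ 2) * hσ2
  have hnr0 : ‖r0‖ = t := by
    rw [hr0, norm_smul, hu1, mul_one, Real.norm_eq_abs, abs_mul, hσabs,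
      mul_one, abs_of_nonneg ht0]
  have hr0F : g ⬝ᵥ (r0 : Fin d → ℝ) + (1/2) * (r0 ⬝ᵥ H.mulVec (r0 : Fin d → ℝ)) ≥ c := by
    rw [hgr0, hrHr]
    have key : t * |a| + 1/2 * (ν * t ^ 2) = c := by
      rw [ht]
      have hν' : ν ≠ 0 := ne_of_gt hν
      have haa : |a| ^ 2 = a ^ 2 := sq_abs a
      have hA : s ^ 2 * a ^ 2 = a ^ 2 + 2 * ν * c := by
        field_simp at hsq; linarith
      field_simp
      linear_combination (s ^ 2 - 1) * haa + hA
    linarith [key.ge]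
  have hmem : ‖r0‖ ∈ norm '' {r : EuclideanSpace ℝ (Fin d) |
      g ⬝ᵥ r + (1 / 2) * (r ⬝ᵥ H.mulVec r) ≥ c} := ⟨r0, hr0F, rfl⟩
  have hbdd : BddBelow (norm '' {r : EuclideanSpace ℝ (Fin d) |
      g ⬝ᵥ r + (1 / 2) * (r ⬝ᵥ H.mulVec r) ≥ c}) :=
    ⟨0, fun y ⟨r, _, hr⟩ => hr ▸ norm_nonneg r⟩
  have hg0 : g ≠ 0 := by
    intro h; apply hgu; rw [ha, h]; simp
  have hgpos : 0 < ‖g‖ := norm_pos_iff.mpr hg0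
  constructor
  · -- lower bound
    apply le_csInf ⟨‖r0‖, hmem⟩
    rintro y ⟨r, hr, rfl⟩
    obtain ⟨b, hb⟩ : ∃ b : ℝ, b = ‖g‖ := ⟨_, rfl⟩
    rw [← hb]
    have hbpos : 0 < b := hb ▸ hgpos
    obtain ⟨n, hn⟩ : ∃ n : ℝ, n = ‖r‖ := ⟨_, rfl⟩
    rw [← hn]
    have hn0 : 0 ≤ n := hn ▸ norm_nonneg r
    have hcs : g ⬝ᵥ (r : Fin d → ℝ) ≤ b * n := by
      rw [dot_eq_inner, hb, hn]; exact real_inner_le_norm g r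
    have hq : c ≤ b * n + 1/2 * (ν * n ^ 2) := by
      have h1 := hray r
      have h2 : c ≤ g ⬝ᵥ (r : Fin d → ℝ) + (1/2) * (r ⬝ᵥ H.mulVec (r : Fin d → ℝ)) := hr
      rw [hn]; nlinarith
    have hkey : b ^ 2 + 2 * ν * c ≤ (ν * n + b) ^ 2 := by nlinarith
    have hsqrt : Real.sqrt (b ^ 2 + 2 * ν * c) ≤ ν * n + b := by
      have h1 : (0:ℝ) ≤ ν * n + b := by positivity
      calc Real.sqrt (b ^ 2 + 2 * ν * c) ≤ Real.sqrt ((ν * n + b) ^ 2) :=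
            Real.sqrt_le_sqrt hkey
        _ = ν * n + b := Real.sqrt_sq h1
    have hbs : b * Real.sqrt (1 + 2 * ν * c / b ^ 2) = Real.sqrt (b ^ 2 + 2 * ν * c) := by
      rw [show b ^ 2 + 2 * ν * c = b ^ 2 * (1 + 2 * ν * c / b ^ 2) by field_simp]
      rw [Real.sqrt_mul (by positivity), Real.sqrt_sq hbpos.le]
    rw [div_mul_eq_mul_div, div_le_iff₀ hν, mul_sub, mul_one, hbs]
    linarith
  · calc sInf (norm '' {r : EuclideanSpace ℝ (Fin d) |
        g ⬝ᵥ r + (1 / 2) * (r ⬝ᵥ H.mulVec r) ≥ c}) ≤ ‖r0‖ := csInf_le hbdd hmem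
      _ = t := hnr0
end

section
/- The infimum of ‖r‖ over the nonempty set F = {r ∈ ℝ^d : gᵀr + (1/2)·rᵀHr ≥ c} satisfies c/‖g‖ − 2ν·c²/‖g‖³ ≤ inf{‖r‖ : r ∈ F} ≤ c/|gᵀu|. (Simplified form of Theorem 1.) -/
open Matrix RealInnerProductSpace

/-- Simplified form of Theorem 1: the minimal adversarial perturbation norm
`inf{‖r‖ : gᵀr + (1/2)·rᵀHr ≥ c}` satisfies
`c/‖g‖ − 2ν·c²/‖g‖³ ≤ inf{‖r‖ : r ∈ F} ≤ c/|gᵀu|`. -/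
theorem robustness_bounds_simplified {d : ℕ} (H : Matrix (Fin d) (Fin d) ℝ) (hH : H.IsSymm)
    (ν : ℝ) (hν : 0 < ν)
    (hray : ∀ r : EuclideanSpace ℝ (Fin d), r ⬝ᵥ H.mulVec r ≤ ν * ‖r‖ ^ 2)
    (u : EuclideanSpace ℝ (Fin d))
    (hu : H.mulVec u = ν • (u : Fin d → ℝ)) (hu1 : ‖u‖ = 1)
    (g : EuclideanSpace ℝ (Fin d)) (hgu : g ⬝ᵥ u ≠ 0) (c : ℝ) (hc : 0 ≤ c) :
    c / ‖g‖ - 2 * ν * c ^ 2 / ‖g‖ ^ 3 ≤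
      sInf (norm '' {r : EuclideanSpace ℝ (Fin d) |
        g ⬝ᵥ r + (1 / 2) * (r ⬝ᵥ H.mulVec r) ≥ c}) ∧
    sInf (norm '' {r : EuclideanSpace ℝ (Fin d) |
        g ⬝ᵥ r + (1 / 2) * (r ⬝ᵥ H.mulVec r) ≥ c}) ≤ c / |g ⬝ᵥ u| := by
  have hdot : ∀ x y : EuclideanSpace ℝ (Fin d), (x : Fin d → ℝ) ⬝ᵥ (y : Fin d → ℝ) = (inner ℝ x y : ℝ) := by
    intro x y
    simp [PiLp.inner_apply, dotProduct, RCLike.inner_apply, mul_comm]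
  have hg : g ≠ 0 := by
    intro h
    apply hgu
    simp [h]
  set s : ℝ := g ⬝ᵥ u with hs
  have hgn : 0 < ‖g‖ := norm_pos_iff.mpr hg
  have huu : (u : Fin d → ℝ) ⬝ᵥ (u : Fin d → ℝ) = 1 := by
    rw [hdot, real_inner_self_eq_norm_sq, hu1]; norm_num
  set r₀ : EuclideanSpace ℝ (Fin d) := (c / s) • u with hr₀
  have hr₀fun : (r₀ : Fin d → ℝ) = (c / s) • (u : Fin d → ℝ) := rfl
  have r₀_mem : r₀ ∈ {r : EuclideanSpace ℝ (Fin d) |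
      g ⬝ᵥ r + (1 / 2) * (r ⬝ᵥ H.mulVec r) ≥ c} := by
    have e1 : g ⬝ᵥ (r₀ : Fin d → ℝ) = (c / s) * s := by
      rw [hr₀fun, dotProduct_smul, smul_eq_mul, ← hs]
    have e2 : (r₀ : Fin d → ℝ) ⬝ᵥ H.mulVec r₀ = (c / s) ^ 2 * ν := by
      rw [hr₀fun, Matrix.mulVec_smul, smul_dotProduct, dotProduct_smul, hu,
        dotProduct_smul, smul_eq_mul, smul_eq_mul, smul_eq_mul, huu]
      ring
    show g ⬝ᵥ (r₀ : Fin d → ℝ) + (1 / 2) * ((r₀ : Fin d → ℝ) ⬝ᵥ H.mulVec r₀) ≥ c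
    rw [e1, e2, div_mul_cancel₀ _ hgu]
    nlinarith [sq_nonneg (c / s)]
  have hne : (norm '' {r : EuclideanSpace ℝ (Fin d) |
      g ⬝ᵥ r + (1 / 2) * (r ⬝ᵥ H.mulVec r) ≥ c}).Nonempty := ⟨‖r₀‖, ⟨r₀, r₀_mem, rfl⟩⟩
  have hbdd : BddBelow (norm '' {r : EuclideanSpace ℝ (Fin d) |
      g ⬝ᵥ r + (1 / 2) * (r ⬝ᵥ H.mulVec r) ≥ c}) := by
    refine ⟨0, ?_⟩
    rintro x ⟨r, _, rfl⟩
    exact norm_nonneg r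
  constructor
  · apply le_csInf hne
    rintro x ⟨r, hr, rfl⟩
    have h1 : g ⬝ᵥ (r : Fin d → ℝ) ≤ ‖g‖ * ‖r‖ := by
      rw [hdot]; exact real_inner_le_norm g r
    have h2 : (r : Fin d → ℝ) ⬝ᵥ H.mulVec r ≤ ν * ‖r‖ ^ 2 := hray r
    have hrn : 0 ≤ ‖r‖ := norm_nonneg r
    have hc' : c ≤ ‖g‖ * ‖r‖ + ν * ‖r‖ ^ 2 / 2 := by
      have := hr
      simp only [Set.mem_setOf_eq, ge_iff_le] at this
      nlinarith
    have key : c * ‖g‖ ^ 2 - 2 * ν * c ^ 2 ≤ ‖r‖ * ‖g‖ ^ 3 := by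
      rcases le_or_gt c (‖r‖ * ‖g‖) with h | h
      · have h0 : (0:ℝ) ≤ 2 * ν * c ^ 2 := by positivity
        nlinarith [mul_le_mul_of_nonneg_right h (sq_nonneg ‖g‖)]
      · nlinarith [mul_le_mul_of_nonneg_right hc' (sq_nonneg ‖g‖),
          mul_nonneg (sub_nonneg.mpr h.le) (by positivity : (0:ℝ) ≤ c + ‖r‖ * ‖g‖)]
    have heq : c / ‖g‖ - 2 * ν * c ^ 2 / ‖g‖ ^ 3 = (c * ‖g‖ ^ 2 - 2 * ν * c ^ 2) / ‖g‖ ^ 3 := by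
      field_simp
    rw [heq, div_le_iff₀ (by positivity)]
    linarith
  · have hnorm : ‖r₀‖ = c / |s| := by
      rw [hr₀, norm_smul, hu1, mul_one, Real.norm_eq_abs, abs_div, abs_of_nonneg hc]
    calc sInf _ ≤ ‖r₀‖ := csInf_le hbdd ⟨r₀, r₀_mem, rfl⟩
      _ = c / |s| := hnorm
end
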